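/- Let ε ∈ (0,1], Ω ⊂ ℝ³ open, T > 0, and let u ∈ C³(Ω×(0,T)) solve the mean curvature flow equation ∂_t u = Σ_{i,j=1}^3 a_{ij}(∇_ε u) X_i^ε X_j^ε u on the Heisenberg group. Then for each k ∈ {1,2,3} the function v_k = X_k^r u solves the divergence-form equation −∂_t v_k + Σ_{i,j=1}^3 X_i^ε( a_{ij}(∇_ε u) X_j^ε v_k ) + Σ_{i,j,h=1}^3 a^{ijh}(∇_ε u) · (X_i^ε X_j^ε u) · X_h^ε v_k = 0 on Ω×(0,T), where a^{ijh}(ξ) = ∂_{ξ_h} a_{ij}(ξ) − ∂_{ξ_j} a_{ih}(ξ). -/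

import Mathlib

/-!
Differentiate the flow equation along the right-invariant field `X_k^r`. Right-invariant fields
commute with left-invariant ones (here: their Lie brackets vanish identically, also after the
scaling of `X₃` by `ε`), and `X_k^r` commutes with `∂_t`, so
`∂_t v_k = Σ ∂_{ξ_h}a_{ij}(∇_ε u) X_h^ε v_k X_i^εX_j^ε u + Σ a_{ij}(∇_ε u) X_i^εX_j^ε v_k`.
Expanding `X_i^ε(a_{ij}(∇_ε u) X_j^ε v_k)` by the Leibniz and chain rules gives the same
second-order part plus `Σ ∂_{ξ_h}a_{ij}(∇_ε u) X_i^εX_h^ε u X_j^ε v_k`, and the `a^{ijh}` term is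
exactly the difference of the two first-order parts.
-/

open Real Set Finset

noncomputable section

/-- Points of the Heisenberg group `ℍ¹ = ℝ³`. -/
abbrev Pt := Fin 3 → ℝ

/-- The Heisenberg group law. -/
def hmul (x y : Pt) : Pt :=
  ![x 0 + y 0, x 1 + y 1, x 2 + y 2 - (x 1 * y 0 - x 0 * y 1)]

/-- Euclidean partial derivative `∂ᵢ`. -/
def pd (i : Fin 3) (f : Pt → ℝ) (x : Pt) : ℝ := fderiv ℝ f x (Pi.single i 1)

/-- The left invariant frame `X₁ = ∂₁ − x₂∂₃`, `X₂ = ∂₂ + x₁∂₃`, `X₃ = 2∂₃`. -/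
def X1 (f : Pt → ℝ) (x : Pt) : ℝ := pd 0 f x - x 1 * pd 2 f x

def X2 (f : Pt → ℝ) (x : Pt) : ℝ := pd 1 f x + x 0 * pd 2 f x

def X3 (f : Pt → ℝ) (x : Pt) : ℝ := 2 * pd 2 f x

/-- The left invariant frame, indexed. -/
def XL (i : Fin 3) : (Pt → ℝ) → Pt → ℝ := ![X1, X2, X3] i

/-- The right invariant frame `X₁^r = ∂₁ + x₂∂₃`, `X₂^r = ∂₂ − x₁∂₃`, `X₃^r = 2∂₃`. -/
def X1r (f : Pt → ℝ) (x : Pt) : ℝ := pd 0 f x + x 1 * pd 2 f x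

def X2r (f : Pt → ℝ) (x : Pt) : ℝ := pd 1 f x - x 0 * pd 2 f x

def X3r (f : Pt → ℝ) (x : Pt) : ℝ := 2 * pd 2 f x

/-- The right invariant frame, indexed. -/
def XR (i : Fin 3) : (Pt → ℝ) → Pt → ℝ := ![X1r, X2r, X3r] i

/-- The ε-frame `X₁^ε = X₁`, `X₂^ε = X₂`, `X₃^ε = εX₃`. -/
def Xe (ε : ℝ) (i : Fin 3) : (Pt → ℝ) → Pt → ℝ :=
  ![X1, X2, fun f x => ε * X3 f x] i

/-- The ε-gradient `∇_εf = (X₁^εf, X₂^εf, X₃^εf)`. -/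
def gradE (ε : ℝ) (f : Pt → ℝ) (x : Pt) : Pt := fun i => Xe ε i f x

/-- `a_{ij}(ξ) = δ_{ij} − ξ_iξ_j/(1+|ξ|²)`. -/
def aCoef (ξ : Pt) (i j : Fin 3) : ℝ :=
  (if i = j then 1 else 0) - ξ i * ξ j / (1 + ∑ k, ξ k ^ 2)

/-- `∂_{ξ_h} a_{ij}(ξ)`, the partial derivative of the coefficient matrix. -/
def aCoefD (h : Fin 3) (ξ : Pt) (i j : Fin 3) : ℝ :=
  fderiv ℝ (fun η => aCoef η i j) ξ (Pi.single h 1)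

open VectorField Topology

theorem ContinuousLinearMap.apply_eq_sum_mul_single {ι : Type*} [Fintype ι] [DecidableEq ι]
    (L : (ι → ℝ) →L[ℝ] ℝ) (v : ι → ℝ) : L v = ∑ m, v m * L (Pi.single m 1) := by
  conv_lhs => rw [← LinearMap.sum_single_apply (φ := fun _ => ℝ) v]
  simp only [map_sum]
  refine Finset.sum_congr rfl fun m _ => ?_
  rw [← smul_eq_mul, ← map_smul, ← Pi.single_smul, smul_eq_mul, mul_one]

section DerivAlong

variable {E : Type*} [NormedAddCommGroup E] [NormedSpace ℝ E]

def derivAlong (V : E → E) (f : E → ℝ) (x : E) : ℝ := fderiv ℝ f x (V x)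

variable {V W : E → E} {f g : E → ℝ} {x : E}

theorem derivAlong_congr (h : f =ᶠ[𝓝 x] g) : derivAlong V f x = derivAlong V g x := by
  rw [derivAlong, h.fderiv_eq, derivAlong]

theorem derivAlong_mul (hf : DifferentiableAt ℝ f x) (hg : DifferentiableAt ℝ g x) :
    derivAlong V (fun y => f y * g y) x = derivAlong V f x * g x + f x * derivAlong V g x := by
  simp only [derivAlong, fderiv_fun_mul hf hg, add_apply, smul_apply, smul_eq_mul]
  ring

theorem derivAlong_sum {ι : Type*} {s : Finset ι} {f : ι → E → ℝ}
    (hf : ∀ i ∈ s, DifferentiableAt ℝ (f i) x) :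
    derivAlong V (fun y => ∑ i ∈ s, f i y) x = ∑ i ∈ s, derivAlong V (f i) x := by
  simp only [derivAlong, fderiv_fun_sum hf, _root_.sum_apply]

theorem ContDiffAt.derivAlong {m n : WithTop ℕ∞} (hf : ContDiffAt ℝ n f x)
    (hV : ContDiffAt ℝ m V x) (hmn : m + 1 ≤ n) : ContDiffAt ℝ m (derivAlong V f) x :=
  (hf.fderiv_right hmn).clm_apply hV

theorem derivAlong_comm (hf : ContDiffAt ℝ 2 f x) (hV : DifferentiableAt ℝ V x)
    (hW : DifferentiableAt ℝ W x) (h : lieBracket ℝ V W x = 0) :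
    derivAlong V (derivAlong W f) x = derivAlong W (derivAlong V f) x := by
  have := fderiv_apply_lieBracket hf (by simp) hW hV
  rw [h, map_zero, eq_comm, sub_eq_zero] at this
  exact this

theorem derivAlong_comp {ι : Type*} [Fintype ι] [DecidableEq ι] {g : E → ι → ℝ}
    {φ : (ι → ℝ) → ℝ} (hφ : DifferentiableAt ℝ φ (g x)) (hg : DifferentiableAt ℝ g x) :
    derivAlong V (fun y => φ (g y)) x
      = ∑ h, fderiv ℝ φ (g x) (Pi.single h 1) * derivAlong V (fun y => g y h) x := by
  rw [derivAlong, fderiv_fun_comp x hφ hg, ContinuousLinearMap.comp_apply,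
    ContinuousLinearMap.apply_eq_sum_mul_single]
  refine Finset.sum_congr rfl fun h _ => ?_
  rw [mul_comm, derivAlong, fderiv_apply hg]
  rfl

end DerivAlong

theorem fderiv_pi_eval {ι : Type*} [Fintype ι] (j : ι) (x : ι → ℝ) :
    fderiv ℝ (fun y : ι → ℝ => y j) x = ContinuousLinearMap.proj j :=
  (hasFDerivAt_apply j x).fderiv

theorem lieBracket_pi_apply {ι : Type*} [Fintype ι] {V W : (ι → ℝ) → ι → ℝ} {x : ι → ℝ}
    (hV : DifferentiableAt ℝ V x) (hW : DifferentiableAt ℝ W x) (m : ι) :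
    lieBracket ℝ V W x m = derivAlong V (fun y => W y m) x - derivAlong W (fun y => V y m) x := by
  simp [lieBracket, derivAlong, fderiv_apply hV, fderiv_apply hW]

section SliceDerivatives

variable {E : Type*} [NormedAddCommGroup E] [NormedSpace ℝ E] {g : E × ℝ → ℝ} {y : E} {s : ℝ}

theorem fderiv_comp_prodMk_left_apply (hg : DifferentiableAt ℝ g (y, s)) (v : E) :
    fderiv ℝ (fun z => g (z, s)) y v = fderiv ℝ g (y, s) (v, 0) := by
  have h : HasFDerivAt (fun z => g (z, s)) ((fderiv ℝ g (y, s)).comp (.inl ℝ E ℝ)) y :=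
    hg.hasFDerivAt.comp y (hasFDerivAt_prodMk_left y s)
  rw [h.fderiv]
  rfl

theorem deriv_comp_prodMk_right (hg : DifferentiableAt ℝ g (y, s)) :
    deriv (fun r => g (y, r)) s = fderiv ℝ g (y, s) (0, 1) :=
  (hg.hasFDerivAt.comp_hasDerivAt s ((hasDerivAt_const s y).prodMk (hasDerivAt_id s))).deriv

theorem deriv_fderiv_comm {u : E → ℝ → ℝ} {x : E} {t : ℝ}
    (hu : ContDiffAt ℝ 2 (fun q : E × ℝ => u q.1 q.2) (x, t)) (v : E) :
    deriv (fun s => fderiv ℝ (fun y => u y s) x v) t = fderiv ℝ (fun y => deriv (u y) t) x v := by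
  -- both sides are second derivatives of `F` along the constant, hence commuting, fields `P`, `Q`
  set F : E × ℝ → ℝ := fun q => u q.1 q.2
  set P : E × ℝ → E × ℝ := fun _ => (v, 0)
  set Q : E × ℝ → E × ℝ := fun _ => (0, 1)
  have hF : ∀ᶠ q in 𝓝 (x, t), DifferentiableAt ℝ F q :=
    (hu.eventually (by simp)).mono fun q hq => hq.differentiableAt (by simp)
  have hPF : DifferentiableAt ℝ (derivAlong P F) (x, t) :=
    (hu.derivAlong contDiffAt_const (by norm_num)).differentiableAt one_ne_zero
  have hQF : DifferentiableAt ℝ (derivAlong Q F) (x, t) :=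
    (hu.derivAlong contDiffAt_const (by norm_num)).differentiableAt one_ne_zero
  calc deriv (fun s => fderiv ℝ (fun y => u y s) x v) t
      = deriv (fun s => derivAlong P F (x, s)) t := by
        refine Filter.EventuallyEq.deriv_eq ?_
        filter_upwards [(continuousAt_const.prodMk continuousAt_id).eventually hF] with s hs
        exact fderiv_comp_prodMk_left_apply hs v
    _ = derivAlong Q (derivAlong P F) (x, t) := deriv_comp_prodMk_right hPF
    _ = derivAlong P (derivAlong Q F) (x, t) :=
        (derivAlong_comm hu (differentiableAt_const _) (differentiableAt_const _)
          (by simp [lieBracket])).symm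
    _ = fderiv ℝ (fun y => derivAlong Q F (y, t)) x v :=
        (fderiv_comp_prodMk_left_apply hQF v).symm
    _ = fderiv ℝ (fun y => deriv (u y) t) x v := by
        have h : (fun y => derivAlong Q F (y, t)) =ᶠ[𝓝 x] fun y => deriv (u y) t := by
          filter_upwards [(continuousAt_id.prodMk continuousAt_const).eventually hF] with y hy
          exact (deriv_comp_prodMk_right hy).symm
        rw [h.fderiv_eq]

end SliceDerivatives

def epsFrameField (ε : ℝ) (i : Fin 3) (x : Pt) : Pt :=
  ![![1, 0, -x 1], ![0, 1, x 0], ![0, 0, 2 * ε]] i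

def rightFrameField (k : Fin 3) (x : Pt) : Pt :=
  ![![1, 0, x 1], ![0, 1, -x 0], ![0, 0, 2]] k

theorem fderiv_apply_eq_sum_pd (f : Pt → ℝ) (x v : Pt) : fderiv ℝ f x v = ∑ m, v m * pd m f x :=
  (fderiv ℝ f x).apply_eq_sum_mul_single v

theorem Xe_eq_derivAlong (ε : ℝ) (i : Fin 3) : Xe ε i = derivAlong (epsFrameField ε i) := by
  funext f x
  fin_cases i <;>
    simp [Xe, X1, X2, X3, derivAlong, epsFrameField, fderiv_apply_eq_sum_pd, Fin.sum_univ_three,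
      sub_eq_add_neg, mul_assoc, mul_left_comm]

theorem XR_eq_derivAlong (k : Fin 3) : XR k = derivAlong (rightFrameField k) := by
  funext f x
  fin_cases k <;>
    simp [XR, X1r, X2r, X3r, derivAlong, rightFrameField, fderiv_apply_eq_sum_pd,
      Fin.sum_univ_three, sub_eq_add_neg]

theorem contDiff_epsFrameField {n : WithTop ℕ∞} (ε : ℝ) (i : Fin 3) :
    ContDiff ℝ n (epsFrameField ε i) := by
  rw [contDiff_pi]
  intro m
  fin_cases i <;> fin_cases m <;> simp [epsFrameField] <;> fun_prop

theorem contDiff_rightFrameField {n : WithTop ℕ∞} (k : Fin 3) :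
    ContDiff ℝ n (rightFrameField k) := by
  rw [contDiff_pi]
  intro m
  fin_cases k <;> fin_cases m <;> simp [rightFrameField] <;> fun_prop

theorem lieBracket_rightFrameField_epsFrameField (ε : ℝ) (k i : Fin 3) (x : Pt) :
    lieBracket ℝ (rightFrameField k) (epsFrameField ε i) x = 0 := by
  ext m
  rw [lieBracket_pi_apply ((contDiff_rightFrameField (n := 1) k).differentiable one_ne_zero x)
    ((contDiff_epsFrameField (n := 1) ε i).differentiable one_ne_zero x)]
  fin_cases k <;> fin_cases i <;> fin_cases m <;>
    simp [derivAlong, epsFrameField, rightFrameField, fderiv_pi_eval]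

section Heisenberg

variable {ε : ℝ} {U w : Pt → ℝ} {x : Pt}

theorem ContDiffAt.Xe {m n : WithTop ℕ∞} (hU : ContDiffAt ℝ n U x) (hmn : m + 1 ≤ n)
    (i : Fin 3) : ContDiffAt ℝ m (Xe ε i U) x := by
  rw [Xe_eq_derivAlong]
  exact hU.derivAlong (contDiff_epsFrameField ε i).contDiffAt hmn

theorem ContDiffAt.XR {m n : WithTop ℕ∞} (hU : ContDiffAt ℝ n U x) (hmn : m + 1 ≤ n)
    (k : Fin 3) : ContDiffAt ℝ m (XR k U) x := by
  rw [XR_eq_derivAlong]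
  exact hU.derivAlong (contDiff_rightFrameField k).contDiffAt hmn

theorem XR_Xe_comm (hU : ContDiffAt ℝ 2 U x) (k i : Fin 3) :
    XR k (Xe ε i U) x = Xe ε i (XR k U) x := by
  rw [XR_eq_derivAlong, Xe_eq_derivAlong]
  exact derivAlong_comm hU ((contDiff_rightFrameField (n := 1) k).differentiable one_ne_zero x)
    ((contDiff_epsFrameField (n := 1) ε i).differentiable one_ne_zero x)
    (lieBracket_rightFrameField_epsFrameField ε k i x)

theorem XR_Xe_Xe_comm (hU : ContDiffAt ℝ 3 U x) (k i j : Fin 3) :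
    XR k (Xe ε i (Xe ε j U)) x = Xe ε i (Xe ε j (XR k U)) x := by
  rw [XR_Xe_comm (hU.Xe (by norm_num) j) k i, Xe_eq_derivAlong ε i]
  refine derivAlong_congr ?_
  filter_upwards [hU.eventually (by simp)] with y hy
  exact XR_Xe_comm (hy.of_le (by norm_num)) k j

theorem differentiable_aCoef (i j : Fin 3) : Differentiable ℝ (fun ξ : Pt => aCoef ξ i j) := by
  have hden : ∀ ξ : Pt, 1 + ∑ k, ξ k ^ 2 ≠ 0 := fun ξ => by positivity
  simp only [aCoef, div_eq_mul_inv]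
  fun_prop (disch := exact hden)

theorem differentiableAt_gradE (hU : ContDiffAt ℝ 2 U x) : DifferentiableAt ℝ (gradE ε U) x :=
  differentiableAt_pi.2 fun h => (hU.Xe (by norm_num) h).differentiableAt one_ne_zero

theorem derivAlong_aCoef_gradE_mul (V : Pt → Pt) (hU : ContDiffAt ℝ 2 U x)
    (hw : DifferentiableAt ℝ w x) (i j : Fin 3) :
    derivAlong V (fun y => aCoef (gradE ε U y) i j * w y) x
      = (∑ h, aCoefD h (gradE ε U x) i j * derivAlong V (Xe ε h U) x) * w x
        + aCoef (gradE ε U x) i j * derivAlong V w x := by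
  have hA : DifferentiableAt ℝ (fun y => aCoef (gradE ε U y) i j) x :=
    (differentiable_aCoef i j _).comp x (differentiableAt_gradE hU)
  rw [derivAlong_mul hA hw,
    derivAlong_comp (differentiable_aCoef i j _) (differentiableAt_gradE hU)]
  rfl

def mcfOperator (ε : ℝ) (U : Pt → ℝ) (y : Pt) : ℝ :=
  ∑ i, ∑ j, aCoef (gradE ε U y) i j * Xe ε i (Xe ε j U) y

theorem derivAlong_mcfOperator (V : Pt → Pt) (hU : ContDiffAt ℝ 3 U x) :
    derivAlong V (mcfOperator ε U) x
      = ∑ i, ∑ j, ((∑ h, aCoefD h (gradE ε U x) i j * derivAlong V (Xe ε h U) x)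
          * Xe ε i (Xe ε j U) x
        + aCoef (gradE ε U x) i j * derivAlong V (Xe ε i (Xe ε j U)) x) := by
  have hU2 : ContDiffAt ℝ 2 U x := hU.of_le (by norm_num)
  have hC : ∀ i j, DifferentiableAt ℝ (Xe ε i (Xe ε j U)) x :=
    fun i j => ((hU.Xe (m := 2) (by norm_num) j).Xe (by norm_num) i).differentiableAt one_ne_zero
  have hA : ∀ i j, DifferentiableAt ℝ (fun y => aCoef (gradE ε U y) i j) x :=
    fun i j => (differentiable_aCoef i j _).comp x (differentiableAt_gradE hU2)
  unfold mcfOperator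
  rw [derivAlong_sum fun i _ => DifferentiableAt.fun_sum fun j _ => (hA i j).fun_mul (hC i j)]
  refine Finset.sum_congr rfl fun i _ => ?_
  rw [derivAlong_sum fun j _ => (hA i j).fun_mul (hC i j)]
  exact Finset.sum_congr rfl fun j _ => derivAlong_aCoef_gradE_mul V hU2 (hC i j) i j

theorem deriv_XR_comm {u : Pt → ℝ → ℝ} {t : ℝ}
    (hu : ContDiffAt ℝ 2 (fun q : Pt × ℝ => u q.1 q.2) (x, t)) (k : Fin 3) :
    deriv (fun s => XR k (fun y => u y s) x) t = XR k (fun y => deriv (u y) t) x := by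
  simp only [XR_eq_derivAlong, derivAlong]
  exact deriv_fderiv_comm hu _

end Heisenberg

theorem statement_10_general (ε : ℝ) (Ω : Set Pt) (hΩ : IsOpen Ω)
    (T : ℝ) (u : Pt → ℝ → ℝ)
    (hu : ContDiffOn ℝ 3 (fun q : Pt × ℝ => u q.1 q.2) (Ω ×ˢ Ioo 0 T))
    (hpde : ∀ x ∈ Ω, ∀ t ∈ Ioo (0 : ℝ) T,
      deriv (u x) t = ∑ i, ∑ j, aCoef (gradE ε (fun y => u y t) x) i j *
        Xe ε i (Xe ε j (fun y => u y t)) x) :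
    ∀ k : Fin 3, ∀ x ∈ Ω, ∀ t ∈ Ioo (0 : ℝ) T,
      -deriv (fun s => XR k (fun y => u y s) x) t +
        (∑ i, ∑ j, Xe ε i (fun y => aCoef (gradE ε (fun z => u z t) y) i j *
            Xe ε j (fun z => XR k (fun w => u w t) z) y) x) +
        (∑ i, ∑ j, ∑ h,
          (aCoefD h (gradE ε (fun y => u y t) x) i j -
            aCoefD j (gradE ε (fun y => u y t) x) i h) *
          Xe ε i (Xe ε j (fun y => u y t)) x *
          Xe ε h (fun y => XR k (fun z => u z t) y) x) = 0 := by
  intro k x hx t ht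
  set U : Pt → ℝ := fun y => u y t
  have hF : ContDiffAt ℝ 3 (fun q : Pt × ℝ => u q.1 q.2) (x, t) :=
    hu.contDiffAt ((hΩ.prod isOpen_Ioo).mem_nhds ⟨hx, ht⟩)
  have hU : ContDiffAt ℝ 3 U x := hF.comp x (contDiffAt_id.prodMk contDiffAt_const)
  have hU2 : ContDiffAt ℝ 2 U x := hU.of_le (by norm_num)
  have hflow : (fun y => deriv (u y) t) =ᶠ[𝓝 x] mcfOperator ε U :=
    Filter.eventually_of_mem (hΩ.mem_nhds hx) fun y hy => hpde y hy t ht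
  have htime : deriv (fun s => XR k (fun y => u y s) x) t
      = ∑ i, ∑ j, ((∑ h, aCoefD h (gradE ε U x) i j * Xe ε h (XR k U) x) * Xe ε i (Xe ε j U) x
        + aCoef (gradE ε U x) i j * Xe ε i (Xe ε j (XR k U)) x) := by
    rw [deriv_XR_comm (hF.of_le (by norm_num)), XR_eq_derivAlong, derivAlong_congr hflow,
      derivAlong_mcfOperator _ hU]
    simp only [← XR_eq_derivAlong, XR_Xe_comm hU2, XR_Xe_Xe_comm hU]
  have hdiv : ∀ i j, Xe ε i (fun y => aCoef (gradE ε U y) i j * Xe ε j (XR k U) y) x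
      = (∑ h, aCoefD h (gradE ε U x) i j * Xe ε i (Xe ε h U) x) * Xe ε j (XR k U) x
        + aCoef (gradE ε U x) i j * Xe ε i (Xe ε j (XR k U)) x := by
    intro i j
    rw [Xe_eq_derivAlong ε i]
    have hw : DifferentiableAt ℝ (Xe ε j (XR k U)) x :=
      ((hU.XR (m := 2) (by norm_num) k).Xe (by norm_num) j).differentiableAt one_ne_zero
    exact derivAlong_aCoef_gradE_mul _ hU2 hw i j
  -- the `∂_{ξ_j} a_{ih}` half of `a^{ijh}` cancels the chain-rule term of the divergence after
  -- swapping `j` and `h`; the rest cancels against the time derivative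
  rw [htime]
  simp only [hdiv]
  simp only [Fin.sum_univ_three]
  ring

/-- If `u ∈ C³` solves the ε-mean curvature flow equation on the Heisenberg group,
then `v_k = X_k^r u` solves the divergence-form equation
`−∂_t v_k + Σ X_i^ε(a_{ij}(∇_ε u) X_j^ε v_k) + Σ a^{ijh}(∇_ε u) X_i^ε X_j^ε u X_h^ε v_k = 0`,
where `a^{ijh} = ∂_{ξ_h}a_{ij} − ∂_{ξ_j}a_{ih}`. -/
theorem statement_10 (ε : ℝ) (hε : ε ∈ Ioc (0 : ℝ) 1) (Ω : Set Pt) (hΩ : IsOpen Ω)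
    (T : ℝ) (hT : 0 < T) (u : Pt → ℝ → ℝ)
    (hu : ContDiffOn ℝ 3 (fun q : Pt × ℝ => u q.1 q.2) (Ω ×ˢ Ioo 0 T))
    (hpde : ∀ x ∈ Ω, ∀ t ∈ Ioo (0 : ℝ) T,
      deriv (u x) t = ∑ i, ∑ j, aCoef (gradE ε (fun y => u y t) x) i j *
        Xe ε i (Xe ε j (fun y => u y t)) x) :
    ∀ k : Fin 3, ∀ x ∈ Ω, ∀ t ∈ Ioo (0 : ℝ) T,
      -deriv (fun s => XR k (fun y => u y s) x) t +
        (∑ i, ∑ j, Xe ε i (fun y => aCoef (gradE ε (fun z => u z t) y) i j *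
            Xe ε j (fun z => XR k (fun w => u w t) z) y) x) +
        (∑ i, ∑ j, ∑ h,
          (aCoefD h (gradE ε (fun y => u y t) x) i j -
            aCoefD j (gradE ε (fun y => u y t) x) i h) *
          Xe ε i (Xe ε j (fun y => u y t)) x *
          Xe ε h (fun y => XR k (fun z => u z t) y) x) = 0 :=
  statement_10_general ε Ω hΩ T u hu hpde

end
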